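/- arXiv:2402.15686 — 2 statements merged into one kernel-verified Lean document; each statement's English description precedes it below -/
import Mathlib

section
/- Let a, b ∈ {0,1}^n, ε ∈ (0,1), d ≥ 1, and let A = diag(c_1,...,c_n) with c_i = 1 if a_i = 1 and c_i = ε if a_i = 0. Let v = Σ_{i : b_i = 1} e_i. Then A^d v = Σ_{i : a_i = b_i = 1} e_i + ε^d · Σ_{i : a_i = 0, b_i = 1} e_i. If ε^{2d}·n = 1 and there is exactly one index i₀ with a_{i₀} = b_{i₀} = 1, then the ℓ₂-sampling distribution of A^d v assigns probability at least 1/2 to i₀. Moreover the condition number of A equals 1/ε in the case that a is neither all-zeros nor all-ones. -/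
open Matrix

/-- Matrix-power lower bound construction: `A^d v` has entries `c_i^d b_i`;
if `ε^{2d} n = 1` and the intersection index `i₀` is unique, the ℓ₂-sampling
distribution of `A^d v` gives `i₀` probability at least `1/2`; and if `a` is
neither all-zeros nor all-ones, the condition number of `A` is `1/ε`. -/
theorem stmt_10 (n d : ℕ) (hn : 0 < n) (hd : 1 ≤ d) (ε : ℝ) (hε : ε ∈ Set.Ioo (0 : ℝ) 1)
    (a b : Fin n → ℝ) (ha : ∀ i, a i = 0 ∨ a i = 1) (hb : ∀ i, b i = 0 ∨ b i = 1) :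
    let c : Fin n → ℝ := fun i => if a i = 1 then 1 else ε
    let w : Fin n → ℝ := fun i => (c i) ^ d * b i
    ((Matrix.diagonal c ^ d).mulVec b = w) ∧
    (ε ^ (2 * d) * n = 1 →
      ∀ i₀ : Fin n, (a i₀ = 1 ∧ b i₀ = 1) → (∀ j, j ≠ i₀ → ¬(a j = 1 ∧ b j = 1)) →
        (1 / 2 : ℝ) ≤ (w i₀) ^ 2 / ∑ i, (w i) ^ 2) ∧
    ((∃ i, a i = 1) → (∃ i, a i = 0) →
      Finset.univ.sup' ⟨⟨0, hn⟩, Finset.mem_univ _⟩ c /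
          Finset.univ.inf' ⟨⟨0, hn⟩, Finset.mem_univ _⟩ c = 1 / ε) := by
  obtain ⟨hε0, hε1⟩ := hε
  intro c w
  have hcle : ∀ i, ε ≤ c i ∧ c i ≤ 1 := by
    intro i
    simp only [c]
    split <;> constructor <;> linarith
  refine ⟨?_, ?_, ?_⟩
  · ext i
    simp [Matrix.diagonal_pow, Matrix.mulVec_diagonal, w, mul_comm]
  · intro hsum i₀ ⟨hai, hbi⟩ huniq
    have hwi : w i₀ = 1 := by simp [w, c, hai, hbi]
    have hbound : ∀ j, j ≠ i₀ → (w j) ^ 2 ≤ ε ^ (2 * d) := by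
      intro j hj
      have := huniq j hj
      rcases hb j with hbj | hbj
      · simp [w, hbj]
        positivity
      · have haj : a j ≠ 1 := fun h => this ⟨h, hbj⟩
        have : w j = ε ^ d := by simp [w, c, haj, hbj]
        rw [this, ← pow_mul, mul_comm d 2]
    have hS : ∑ i, (w i) ^ 2 ≤ 2 := by
      have h1 : ∑ i, (w i) ^ 2 = (w i₀)^2 + ∑ i ∈ Finset.univ.erase i₀, (w i)^2 :=
        (Finset.add_sum_erase _ (fun i => (w i)^2) (Finset.mem_univ i₀)).symm
      rw [h1, hwi, one_pow]
      have h2 : ∑ i ∈ Finset.univ.erase i₀, (w i)^2 ≤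
          ∑ _i ∈ Finset.univ.erase i₀, ε ^ (2*d) := by
        apply Finset.sum_le_sum
        intro j hj
        exact hbound j (Finset.mem_erase.mp hj).1
      have h3 : (Finset.univ.erase i₀).card ≤ n := by
        simpa using Finset.card_le_univ (Finset.univ.erase i₀)
      have h4 : ∑ _i ∈ Finset.univ.erase i₀, ε ^ (2*d) ≤ n * ε ^ (2*d) := by
        rw [Finset.sum_const, nsmul_eq_mul]
        have : (0:ℝ) ≤ ε ^ (2*d) := by positivity
        exact mul_le_mul_of_nonneg_right (by exact_mod_cast h3) this
      nlinarith [hsum]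
    have hSpos : (0:ℝ) < ∑ i, (w i) ^ 2 := by
      have : (1:ℝ) ≤ ∑ i, (w i) ^ 2 := by
        have := Finset.single_le_sum (f := fun i => (w i)^2)
          (fun i _ => by positivity) (Finset.mem_univ i₀)
        simpa [hwi] using this
      linarith
    rw [hwi, one_pow, le_div_iff₀ hSpos]
    linarith
  · rintro ⟨i1, hi1⟩ ⟨i0, hi0⟩
    have hsup : Finset.univ.sup' ⟨⟨0, hn⟩, Finset.mem_univ _⟩ c = 1 := by
      apply le_antisymm
      · exact Finset.sup'_le _ _ fun i _ => (hcle i).2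
      · refine Finset.le_sup'_of_le _ (Finset.mem_univ i1) ?_
        simp [c, hi1]
    have hinf : Finset.univ.inf' ⟨⟨0, hn⟩, Finset.mem_univ _⟩ c = ε := by
      apply le_antisymm
      · refine Finset.inf'_le_of_le _ (Finset.mem_univ i0) ?_
        have : a i0 ≠ 1 := by rw [hi0]; norm_num
        simp [c, this]
      · exact Finset.le_inf' _ _ fun i _ => (hcle i).1
    rw [hsup, hinf]
end

section
/- Let H = (1/√2)·[[1,1],[1,−1]] be the Hadamard matrix and I₂ the 2×2 identity. Define the 2^n × 2^n matrix B = (1/(2n))·Σ_{j=1}^n I₂^{⊗(j−1)} ⊗ (I₂ − H) ⊗ I₂^{⊗(n−j)}. Then e^{i·B·nπ} = H^{⊗n}, where e^{i·B·t} denotes the matrix exponential of i·t·B. -/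
open Matrix
open scoped Nat

open NormedSpace in
lemma stmt11_exp_smul_of_sq {A : Type*} [NormedRing A] [NormedAlgebra ℂ A] [CompleteSpace A]
    (P : A) (hP : P * P = (2:ℂ) • P) (c : ℂ) :
    exp (c • P) = 1 + ((Complex.exp (2*c) - 1)/2) • P := by
  have hpow : ∀ k : ℕ, P ^ (k+1) = ((2:ℂ)^k) • P := by
    intro k
    induction k with
    | zero => simp
    | succ k ih => rw [pow_succ, ih, smul_mul_assoc, hP, smul_smul, pow_succ]
  have hsum : Summable fun k : ℕ => (((k !) : ℂ))⁻¹ • (c • P) ^ k := expSeries_summable' _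
  have hs : Summable fun k : ℕ => (((k !) : ℂ))⁻¹ * (2*c)^k := by
    simpa [smul_eq_mul] using expSeries_summable' (𝕂 := ℂ) (2*c)
  have h2 : Complex.exp (2*c) = ∑' k : ℕ, (((k !) : ℂ))⁻¹ * (2*c)^k := by
    rw [Complex.exp_eq_exp_ℂ, exp_eq_tsum ℂ]; simp [smul_eq_mul]
  have hs' : Summable fun k : ℕ => ((((k+1) !) : ℂ))⁻¹ * (2*c)^(k+1) :=
    (summable_nat_add_iff (f := fun k : ℕ => (((k !) : ℂ))⁻¹ * (2*c)^k) 1).2 hs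
  have h3 : ∑' k : ℕ, ((((k+1) !) : ℂ))⁻¹ * (2*c)^(k+1) = Complex.exp (2*c) - 1 := by
    rw [h2, hs.tsum_eq_zero_add]; simp
  rw [exp_eq_tsum ℂ]
  simp only []
  rw [hsum.tsum_eq_zero_add]
  have hterm : ∀ k : ℕ, ((((k+1) !) : ℂ))⁻¹ • (c • P) ^ (k+1)
      = (((((k+1) !) : ℂ))⁻¹ * (2*c)^(k+1) * (2:ℂ)⁻¹) • P := by
    intro k
    rw [smul_pow, hpow, smul_smul, smul_smul]
    congr 1
    rw [mul_pow, pow_succ]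
    field_simp
    ring
  simp only [hterm, pow_zero, one_smul]
  rw [(hs'.mul_right _).tsum_smul_const, tsum_mul_right, h3, div_eq_mul_inv]
  norm_num

open NormedSpace in
lemma stmt11_matrix_exp_proj {m : Type*} [Fintype m] [DecidableEq m] (P : Matrix m m ℂ)
    (hP : P * P = (2:ℂ) • P) :
    exp ((Complex.I * Real.pi / 2) • P) = 1 - P := by
  letI : SeminormedRing (Matrix m m ℂ) := Matrix.linftyOpSemiNormedRing
  letI : NormedRing (Matrix m m ℂ) := Matrix.linftyOpNormedRing
  letI : NormedAlgebra ℂ (Matrix m m ℂ) := Matrix.linftyOpNormedAlgebra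
  refine (stmt11_exp_smul_of_sq P hP _).trans ?_
  have h1 : Complex.exp (2 * (Complex.I * (Real.pi:ℂ) / 2)) = -1 := by
    rw [show (2 * (Complex.I * (Real.pi:ℂ) / 2)) = (Real.pi:ℂ) * Complex.I by ring]
    exact Complex.exp_pi_mul_I
  rw [h1, show ((-1:ℂ)-1)/2 = -1 by norm_num, neg_one_smul, ← sub_eq_add_neg]

/-- tensor product of 2x2 matrices as a big matrix -/
def stmt11M {n : ℕ} (f : Fin n → Matrix (Fin 2) (Fin 2) ℂ) :
    Matrix (Fin n → Fin 2) (Fin n → Fin 2) ℂ :=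
  Matrix.of fun x y => ∏ i, f i (x i) (y i)

lemma stmt11M_mul {n : ℕ} (f g : Fin n → Matrix (Fin 2) (Fin 2) ℂ) :
    stmt11M f * stmt11M g = stmt11M (fun i => f i * g i) := by
  ext x y
  simp only [stmt11M, Matrix.mul_apply, Matrix.of_apply]
  rw [Finset.prod_univ_sum, Fintype.piFinset_univ]
  exact Finset.sum_congr rfl fun z _ => (Finset.prod_mul_distrib).symm

lemma stmt11M_one {n : ℕ} : (stmt11M (fun _ : Fin n => 1)) = 1 := by
  ext x y
  simp only [stmt11M, Matrix.of_apply, Matrix.one_apply]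
  rw [Finset.prod_boole]
  simp [funext_iff]

def stmt11K {n : ℕ} (H : Matrix (Fin 2) (Fin 2) ℂ) (j : Fin n) :
    Matrix (Fin n → Fin 2) (Fin n → Fin 2) ℂ :=
  stmt11M (fun i => if i = j then H else 1)

lemma stmt11K_apply {n : ℕ} (H : Matrix (Fin 2) (Fin 2) ℂ) (j : Fin n) :
    stmt11K H j
      = Matrix.of fun x y => if ∀ i, i ≠ j → x i = y i then H (x j) (y j) else 0 := by
  ext x y
  simp only [stmt11K, stmt11M, Matrix.of_apply]
  rw [← Finset.mul_prod_erase Finset.univ _ (Finset.mem_univ j), if_pos rfl]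
  have h1 : ∏ i ∈ Finset.univ.erase j, (if i = j then H else 1) (x i) (y i)
      = ∏ i ∈ Finset.univ.erase j, (if x i = y i then (1:ℂ) else 0) := by
    refine Finset.prod_congr rfl fun i hi => ?_
    rw [if_neg (Finset.mem_erase.1 hi).1, Matrix.one_apply]
  rw [h1, Finset.prod_boole]
  by_cases h : ∀ i, i ≠ j → x i = y i
  · rw [if_pos h, if_pos, mul_one]
    intro i hi; exact h i (Finset.mem_erase.1 hi).1
  · rw [if_neg h, if_neg, mul_zero]
    intro hc
    exact h fun i hij => hc i (Finset.mem_erase.2 ⟨hij, Finset.mem_univ i⟩)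

lemma stmt11K_comm {n : ℕ} (H : Matrix (Fin 2) (Fin 2) ℂ) (j k : Fin n) :
    Commute (stmt11K H j) (stmt11K H k) := by
  unfold stmt11K Commute SemiconjBy
  rw [stmt11M_mul, stmt11M_mul]
  refine congrArg stmt11M (funext fun i => ?_)
  rcases eq_or_ne i j with rfl | hj <;> rcases eq_or_ne i k with rfl | hk <;> simp [*]

lemma stmt11K_sq {n : ℕ} (H : Matrix (Fin 2) (Fin 2) ℂ) (hH : H * H = 1) (j : Fin n) :
    stmt11K H j * stmt11K H j = 1 := by
  unfold stmt11K
  rw [stmt11M_mul]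
  rw [show (fun i => (if i = j then H else 1) * (if i = j then H else 1))
      = fun _ : Fin n => (1 : Matrix (Fin 2) (Fin 2) ℂ) from
    funext fun i => by split_ifs <;> simp [hH]]
  exact stmt11M_one

lemma stmt11T_sq {n : ℕ} (H : Matrix (Fin 2) (Fin 2) ℂ) (hH : H * H = 1) (j : Fin n) :
    (1 - stmt11K H j) * (1 - stmt11K H j) = (2:ℂ) • (1 - stmt11K H j) := by
  simp only [mul_sub, sub_mul, stmt11K_sq H hH, one_mul, mul_one]
  rw [two_smul]
  abel

open NormedSpace in
lemma stmt11_exp_sum_K {n : ℕ} (H : Matrix (Fin 2) (Fin 2) ℂ) (hH : H * H = 1)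
    (s : Finset (Fin n)) :
    exp (∑ j ∈ s, (Complex.I * Real.pi / 2) • (1 - stmt11K H j))
      = stmt11M (fun i => if i ∈ s then H else 1) := by
  classical
  induction s using Finset.induction_on with
  | empty => simpa using stmt11M_one.symm
  | @insert a s ha ih =>
    rw [Finset.sum_insert ha]
    have hcomm : ∀ j k : Fin n,
        Commute ((Complex.I * Real.pi / 2) • (1 - stmt11K H j))
          ((Complex.I * Real.pi / 2) • (1 - stmt11K H k)) := by
      intro j k
      have h1 : Commute (1 - stmt11K H j) (1 - stmt11K H k) :=
        (Commute.one_left _).sub_left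
          ((Commute.one_right _).sub_right (stmt11K_comm H j k))
      exact (h1.smul_left _).smul_right _
    rw [Matrix.exp_add_of_commute _ _ (Commute.sum_right _ _ _ fun j _ => hcomm a j), ih]
    rw [stmt11_matrix_exp_proj _ (stmt11T_sq H hH a), sub_sub_cancel]
    unfold stmt11K
    rw [stmt11M_mul]
    refine congrArg stmt11M (funext fun i => ?_)
    rcases eq_or_ne i a with rfl | hi
    · simp [ha]
    · simp [hi, Finset.mem_insert]

lemma stmt11_Hsq : ((((Real.sqrt 2 : ℝ) : ℂ))⁻¹ • !![1, 1; 1, -1] : Matrix (Fin 2) (Fin 2) ℂ) *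
    ((((Real.sqrt 2 : ℝ) : ℂ))⁻¹ • !![1, 1; 1, -1]) = 1 := by
  have h2 : ((Real.sqrt 2 : ℝ) : ℂ) * ((Real.sqrt 2 : ℝ) : ℂ) = 2 := by
    norm_cast
    exact Real.mul_self_sqrt (by norm_num)
  rw [Matrix.smul_mul, Matrix.mul_smul, smul_smul, ← mul_inv, h2, Matrix.mul_fin_two,
    Matrix.one_fin_two]
  norm_num

/-- `e^{i·B·nπ} = H^{⊗n}` where
`B = (1/(2n))·Σⱼ I⊗…⊗(I−H)⊗…⊗I` and `H` is the 2×2 Hadamard matrix. -/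
theorem stmt_11 (n : ℕ) (hn : 0 < n) :
    let H : Matrix (Fin 2) (Fin 2) ℂ :=
      (((Real.sqrt 2 : ℝ) : ℂ))⁻¹ • !![1, 1; 1, -1]
    let T : Fin n → Matrix (Fin n → Fin 2) (Fin n → Fin 2) ℂ := fun j =>
      Matrix.of fun x y =>
        if ∀ i, i ≠ j → x i = y i then (1 - H) (x j) (y j) else 0
    let B : Matrix (Fin n → Fin 2) (Fin n → Fin 2) ℂ := ((2 * n : ℂ))⁻¹ • ∑ j, T j
    let Hn : Matrix (Fin n → Fin 2) (Fin n → Fin 2) ℂ :=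
      Matrix.of fun x y => ∏ i, H (x i) (y i)
    NormedSpace.exp ((Complex.I * n * Real.pi) • B) = Hn := by
  intro H T B Hn
  have hH : H * H = 1 := stmt11_Hsq
  have hT : ∀ j, T j = 1 - stmt11K H j := by
    intro j
    have hTj : T j = Matrix.of fun x y =>
        (if ∀ i, i ≠ j → x i = y i then (1 - H) (x j) (y j) else 0) := rfl
    rw [hTj, stmt11K_apply]
    ext x y
    simp only [Matrix.sub_apply, Matrix.one_apply, Matrix.of_apply]
    by_cases h : ∀ i, i ≠ j → x i = y i
    · rw [if_pos h, if_pos h]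
      have hxy : (x = y) ↔ (x j = y j) :=
        ⟨fun hh => by rw [hh], fun hh => funext fun i => by
          by_cases hij : i = j
          · subst hij; exact hh
          · exact h i hij⟩
      by_cases hj : x j = y j
      · rw [if_pos hj, if_pos (hxy.2 hj)]
      · rw [if_neg hj, if_neg (fun hh => hj (hxy.1 hh))]
    · have hxy : x ≠ y := by
        intro hh
        push_neg at h
        obtain ⟨i, hij, hne⟩ := h
        exact hne (congrFun hh i)
      rw [if_neg h, if_neg h, sub_zero, if_neg hxy]
  have hn' : (n:ℂ) ≠ 0 := Nat.cast_ne_zero.2 hn.ne'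
  have hc : (Complex.I * n * Real.pi) • B
      = ∑ j : Fin n, (Complex.I * Real.pi / 2) • (1 - stmt11K H j) := by
    have hB : B = ((2 * n : ℂ))⁻¹ • ∑ j, T j := rfl
    rw [hB, smul_smul, Finset.smul_sum]
    refine Finset.sum_congr rfl fun j _ => ?_
    rw [hT j]
    congr 1
    field_simp
  rw [hc, stmt11_exp_sum_K H hH Finset.univ]
  have hind : (fun i : Fin n => if i ∈ Finset.univ then H else 1) = fun _ => H := by
    funext i; simp
  rw [hind]
  rfl
end
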